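/- arXiv:1710.00029 — 2 statements merged into one kernel-verified Lean document; each statement's English description precedes it below -/
import Mathlib

section
/- Let I ∈ ℝ∖{0,1}, μ ∈ ℝ∖{0}, α(I) = I²·sinh(π(I−1)/2)/((I−1)²·sinh(πI/2)) and β(I) = Iα(I)/(I−1). Then there exist real φ, σ satisfying simultaneously μα(I)·sin φ + sin σ = 0 and I·μα(I)·cos φ + (I−1)·cos σ = 0 if and only if (μ²α(I)² − 1)·(μ²β(I)² − 1) ≤ 0. -/
open Real

/-- `α(I) = I² sinh(π(I-1)/2) / ((I-1)² sinh(πI/2))`. -/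
noncomputable def alphaFn (I : ℝ) : ℝ :=
  I ^ 2 * Real.sinh (π * (I - 1) / 2) / ((I - 1) ^ 2 * Real.sinh (π * I / 2))

/-- `β(I) = I α(I) / (I - 1)`. -/
noncomputable def betaFn (I : ℝ) : ℝ := I * alphaFn I / (I - 1)

/-- A point on the unit circle is `(cos σ, sin σ)` for some `σ`. -/
lemma exists_angle (x y : ℝ) (h : x ^ 2 + y ^ 2 = 1) :
    ∃ σ : ℝ, Real.cos σ = x ∧ Real.sin σ = y := by
  have hx1 : -1 ≤ x := by nlinarith
  have hx2 : x ≤ 1 := by nlinarith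
  have hyx : 1 - x ^ 2 = y ^ 2 := by linarith
  rcases le_or_gt 0 y with hy | hy
  · refine ⟨Real.arccos x, Real.cos_arccos hx1 hx2, ?_⟩
    rw [Real.sin_arccos, hyx, Real.sqrt_sq hy]
  · refine ⟨-Real.arccos x, ?_, ?_⟩
    · rw [Real.cos_neg]; exact Real.cos_arccos hx1 hx2
    · rw [Real.sin_neg, Real.sin_arccos, hyx]
      rw [show y ^ 2 = (-y) ^ 2 by ring, Real.sqrt_sq (by linarith)]
      ring

lemma aux_ineq (A B u v : ℝ) (hu : 0 ≤ u) (hv : 0 ≤ v) (h1 : u + v = 1)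
    (h2 : A * u + B * v = 1) : (A - 1) * (B - 1) ≤ 0 := by
  have h0 : (A - 1) * u + (B - 1) * v = 0 := by linarith
  have huv : 0 ≤ u * v := mul_nonneg hu hv
  have e1 : (A - 1) * (B - 1) * (u * v) = -(((B - 1) * v) ^ 2) := by
    linear_combination ((B - 1) * v) * h0
  have e2 : (A - 1) * (B - 1) * u ^ 2 = -((B - 1) ^ 2 * (u * v)) := by
    linear_combination ((B - 1) * u) * h0
  have e3 : (A - 1) * (B - 1) * v ^ 2 = -((A - 1) ^ 2 * (u * v)) := by
    linear_combination ((A - 1) * v) * h0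
  have e4 : (A - 1) * (B - 1) =
      (A - 1) * (B - 1) * u ^ 2 + 2 * ((A - 1) * (B - 1) * (u * v)) +
        (A - 1) * (B - 1) * v ^ 2 := by
    linear_combination (-((A - 1) * (B - 1) * (u + v + 1))) * h1
  rw [e1, e2, e3] at e4
  have p1 : 0 ≤ (B - 1) ^ 2 * (u * v) := mul_nonneg (sq_nonneg _) huv
  have p2 : 0 ≤ (A - 1) ^ 2 * (u * v) := mul_nonneg (sq_nonneg _) huv
  have p3 : 0 ≤ ((B - 1) * v) ^ 2 := sq_nonneg _
  linarith

/-- Characterization of tangencies between NHIM lines and crests: the system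
`μα(I) sin φ + sin σ = 0`, `I μα(I) cos φ + (I-1) cos σ = 0` has a solution `(φ,σ)`
if and only if `(μ²α(I)² - 1)(μ²β(I)² - 1) ≤ 0`. -/
theorem tangency_characterization (μ I : ℝ) (hμ : μ ≠ 0) (hI0 : I ≠ 0) (hI1 : I ≠ 1) :
    (∃ φ σ : ℝ,
        μ * alphaFn I * Real.sin φ + Real.sin σ = 0 ∧
        I * (μ * alphaFn I) * Real.cos φ + (I - 1) * Real.cos σ = 0) ↔
      (μ ^ 2 * (alphaFn I) ^ 2 - 1) * (μ ^ 2 * (betaFn I) ^ 2 - 1) ≤ 0 := by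
  have hI1' : I - 1 ≠ 0 := sub_ne_zero.mpr hI1
  set A : ℝ := μ * alphaFn I with hA
  set B : ℝ := μ * betaFn I with hB
  have keyid : (I - 1) * B = I * A := by
    rw [hA, hB]; unfold betaFn; field_simp
  have hgoal : (μ ^ 2 * (alphaFn I) ^ 2 - 1) * (μ ^ 2 * (betaFn I) ^ 2 - 1)
      = (A ^ 2 - 1) * (B ^ 2 - 1) := by rw [hA, hB]; ring
  rw [hgoal]
  constructor
  · rintro ⟨φ, σ, h1, h2⟩
    have hsin : Real.sin σ = -(A * Real.sin φ) := by linarith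
    have hcos : Real.cos σ = -(B * Real.cos φ) := by
      apply mul_left_cancel₀ hI1'
      have h3 : (I - 1) * Real.cos σ = -(I * A * Real.cos φ) := by linarith
      rw [h3]
      linear_combination (Real.cos φ) * keyid
    have hpy : Real.sin σ ^ 2 + Real.cos σ ^ 2 = 1 := Real.sin_sq_add_cos_sq σ
    rw [hsin, hcos] at hpy
    have h2' : A ^ 2 * Real.sin φ ^ 2 + B ^ 2 * Real.cos φ ^ 2 = 1 := by
      linear_combination hpy
    exact aux_ineq (A ^ 2) (B ^ 2) (Real.sin φ ^ 2) (Real.cos φ ^ 2)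
      (sq_nonneg _) (sq_nonneg _) (Real.sin_sq_add_cos_sq φ) h2'
  · intro h
    by_cases hAB : B ^ 2 - A ^ 2 = 0
    · have hsq : (A ^ 2 - 1) ^ 2 ≤ 0 := by nlinarith
      have hA0 : A ^ 2 - 1 = 0 :=
        pow_eq_zero_iff (by norm_num) |>.mp (le_antisymm hsq (sq_nonneg _))
      have hB1 : B ^ 2 = 1 := by nlinarith
      obtain ⟨σ, hc, hs⟩ := exists_angle (-B) 0 (by linear_combination hB1)
      refine ⟨0, σ, ?_, ?_⟩
      · rw [Real.sin_zero, hs]; ring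
      · rw [Real.cos_zero, hc]; linear_combination (-1 : ℝ) * keyid
    · set t : ℝ := (1 - A ^ 2) / (B ^ 2 - A ^ 2) with ht
      have key : (B ^ 2 - A ^ 2) * t = 1 - A ^ 2 := by
        rw [ht]; field_simp
      have hN : (1 - A ^ 2) * ((B ^ 2 - A ^ 2) - (1 - A ^ 2)) ≥ 0 := by nlinarith
      have ht0 : 0 ≤ t := by
        rcases lt_or_gt_of_ne hAB with hd | hd
        · have hNle : 1 - A ^ 2 ≤ 0 := by nlinarith
          nlinarith [key]
        · have hNge : 0 ≤ 1 - A ^ 2 := by nlinarith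
          nlinarith [key]
      have ht1 : t ≤ 1 := by
        rcases lt_or_gt_of_ne hAB with hd | hd
        · have hle : B ^ 2 - A ^ 2 ≤ 1 - A ^ 2 := by nlinarith
          nlinarith [key]
        · have hge : 1 - A ^ 2 ≤ B ^ 2 - A ^ 2 := by nlinarith
          nlinarith [key]
      set c : ℝ := Real.sqrt t with hcdef
      set s : ℝ := Real.sqrt (1 - t) with hsdef
      have hc2 : c ^ 2 = t := Real.sq_sqrt ht0
      have hs2 : s ^ 2 = 1 - t := Real.sq_sqrt (by linarith)
      obtain ⟨φ, hφc, hφs⟩ := exists_angle c s (by rw [hc2, hs2]; ring)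
      obtain ⟨σ, hσc, hσs⟩ := exists_angle (-(B * c)) (-(A * s))
        (by linear_combination B ^ 2 * hc2 + A ^ 2 * hs2 + key)
      refine ⟨φ, σ, ?_, ?_⟩
      · rw [hφs, hσs]; ring
      · rw [hφc, hσc]; linear_combination (-c) * keyid
end

section
/- Let I ∈ ℝ∖{0,1} and μ ≠ 0 be such that |μα(I)| < 1 ≤ |μβ(I)|, where α(I) = I²sinh(π(I−1)/2)/((I−1)²sinh(πI/2)) and β(I) = Iα(I)/(I−1). Then φ* = arctan(√((β(I)² − μ^{−2})/(μ^{−2} − α(I)²))) satisfies (μα(I)·cos φ*)² / (1 − μ²α(I)²·sin²φ*) = ((I−1)/I)², i.e. φ* is a tangency point of the horizontal crest σ = ξ_M(I,φ) = −arcsin(μα(I)sin φ) with a NHIM line of slope (I−1)/I. -/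
open Real

/-- Tangency point of a horizontal crest with a NHIM line: if `|μα(I)| < 1 ≤ |μβ(I)|`
then `φ* = arctan √((β² - μ⁻²)/(μ⁻² - α²))` satisfies the tangency equation
`(μα cos φ*)² / (1 - μ²α² sin²φ*) = ((I-1)/I)²`. -/
theorem tangency_point_horizontal_crest (μ I : ℝ) (hμ : μ ≠ 0) (hI0 : I ≠ 0) (hI1 : I ≠ 1)
    (h₁ : |μ * alphaFn I| < 1) (h₂ : 1 ≤ |μ * betaFn I|) :
    (μ * alphaFn I *
        Real.cos (Real.arctan (Real.sqrt
          (((betaFn I) ^ 2 - (μ⁻¹) ^ 2) / ((μ⁻¹) ^ 2 - (alphaFn I) ^ 2))))) ^ 2 /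
      (1 - μ ^ 2 * (alphaFn I) ^ 2 *
        (Real.sin (Real.arctan (Real.sqrt
          (((betaFn I) ^ 2 - (μ⁻¹) ^ 2) / ((μ⁻¹) ^ 2 - (alphaFn I) ^ 2))))) ^ 2) =
    ((I - 1) / I) ^ 2 := by
  set a := alphaFn I with ha
  set b := betaFn I with hbdef
  have hI1' : I - 1 ≠ 0 := sub_ne_zero.mpr hI1
  have hb : b = I * a / (I - 1) := rfl
  have hμ2 : (0:ℝ) < μ ^ 2 := by positivity
  have hμinv : μ * μ⁻¹ = 1 := mul_inv_cancel₀ hμ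
  -- basic inequalities
  have h₁' : (μ * a) ^ 2 < 1 := by
    have := sq_abs (μ * a) ▸ pow_lt_pow_left₀ h₁ (abs_nonneg _) (by norm_num : 2 ≠ 0)
    calc (μ * a) ^ 2 = |μ * a| ^ 2 := (sq_abs _).symm
      _ < 1 ^ 2 := by
        exact pow_lt_pow_left₀ h₁ (abs_nonneg _) (by norm_num)
      _ = 1 := one_pow 2
  have h₂' : (1:ℝ) ≤ (μ * b) ^ 2 := by
    calc (1:ℝ) = 1 ^ 2 := (one_pow 2).symm
      _ ≤ |μ * b| ^ 2 := by
        exact pow_le_pow_left₀ (by norm_num) h₂ 2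
      _ = (μ * b) ^ 2 := sq_abs _
  have hd : (0:ℝ) < (μ⁻¹) ^ 2 - a ^ 2 := by
    nlinarith [hμ2, hμinv, h₁']
  have hn : (0:ℝ) ≤ b ^ 2 - (μ⁻¹) ^ 2 := by
    nlinarith [hμ2, hμinv, h₂']
  have hb0 : b ≠ 0 := by
    intro h
    rw [h] at hn
    have : (0:ℝ) < (μ⁻¹) ^ 2 := by positivity
    nlinarith
  have ha0 : a ≠ 0 := by
    intro h
    apply hb0
    rw [hb, h, mul_zero, zero_div]
  set s : ℝ := (b ^ 2 - (μ⁻¹) ^ 2) / ((μ⁻¹) ^ 2 - a ^ 2) with hsdef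
  have hs0 : (0:ℝ) ≤ s := div_nonneg hn hd.le
  have hsq : Real.sqrt s ^ 2 = s := Real.sq_sqrt hs0
  have h1s : (0:ℝ) < 1 + s := by linarith
  have hsd : s * ((μ⁻¹) ^ 2 - a ^ 2) = b ^ 2 - (μ⁻¹) ^ 2 :=
    div_mul_cancel₀ _ hd.ne'
  -- rewrite trig
  rw [Real.cos_arctan, Real.sin_arctan, hsq]
  have hsqrt1s : Real.sqrt (1 + s) ^ 2 = 1 + s := Real.sq_sqrt h1s.le
  have hsqrt1s0 : Real.sqrt (1 + s) ≠ 0 := by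
    positivity
  have hcos2 : (1 / Real.sqrt (1 + s)) ^ 2 = 1 / (1 + s) := by
    rw [div_pow, hsqrt1s, one_pow]
  have hsin2 : (Real.sqrt s / Real.sqrt (1 + s)) ^ 2 = s / (1 + s) := by
    rw [div_pow, hsqrt1s, hsq]
  rw [mul_pow, mul_pow, hcos2, hsin2]
  -- denominator positive
  have hnum : μ ^ 2 * a ^ 2 * s < 1 + s := by nlinarith [h₁', hs0]
  have hden : (0:ℝ) < 1 - μ ^ 2 * a ^ 2 * (s / (1 + s)) := by
    have : μ ^ 2 * a ^ 2 * (s / (1 + s)) < 1 := by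
      rw [mul_div_assoc']
      exact (div_lt_one h1s).mpr hnum
    linarith
  -- key: 1 - μ²a² s/(1+s) = μ²b²/(1+s)
  have h2 : μ ^ 2 * (μ⁻¹) ^ 2 = 1 := by
    rw [← mul_pow, hμinv, one_pow]
  have key : 1 - μ ^ 2 * a ^ 2 * (s / (1 + s)) = μ ^ 2 * b ^ 2 / (1 + s) := by
    rw [eq_div_iff h1s.ne', sub_mul, mul_assoc, div_mul_cancel₀ _ h1s.ne']
    linear_combination μ ^ 2 * hsd - (1 + s) * h2
  rw [key, hb]
  field_simp
end
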